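/- Let R be a local ring and A ∈ M₂(R). If A is not in M₂(J(R)) and A is not invertible, then A is similar to a companion matrix [[0, w],[1, r]] with w ∈ J(R) and r ∈ R. -/

import Mathlib

/-!
It suffices to find a cyclic vector `v` for `A`, i.e. one whose Krylov matrix `P = [v | A v]` is
invertible: then `P⁻¹ A P` maps `e₁` to `e₂`, so it is a companion matrix `[[0, w], [1, r]]`, and
`w` is a nonunit because `A` is not invertible. If `A 1 0` or `A 0 1` is a unit, `e₁` or `e₂` is
cyclic. Otherwise exactly one diagonal entry is a unit, as two unit diagonal entries would make `A`
invertible, and then `e₁ + e₂` is cyclic. Every invertibility claim reduces to the Schur complement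
of a unit corner entry, using that the nonunits of a local ring form a two-sided ideal.
-/

namespace IsLocalRing

variable {R : Type*} [Ring R] [IsLocalRing R]

/-- `b * a` is idempotent, and a local ring has no idempotents other than `0` and `1`. -/
instance isDedekindFiniteMonoid : IsDedekindFiniteMonoid R where
  mul_eq_one_symm {a b} hab := by
    have hidem : b * a * (b * a) = b * a := by rw [mul_assoc, ← mul_assoc a, hab, one_mul]
    rcases isUnit_or_isUnit_of_add_one (add_sub_cancel (b * a) 1) with he | he
    · exact he.mul_left_cancel (hidem.trans (mul_one _).symm)
    · have hzero : b * a = 0 :=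
        (he.mul_left_eq_zero).1 (by rw [mul_sub, mul_one, hidem, sub_self])
      have : (1 : R) = 0 := by
        calc (1 : R) = a * (b * a) * b := by rw [← mul_assoc, hab, one_mul, hab]
          _ = 0 := by rw [hzero, mul_zero, zero_mul]
      exact absurd this one_ne_zero

theorem isUnit_add_of_isUnit_of_not_isUnit {u x : R} (hu : IsUnit u) (hx : ¬IsUnit x) :
    IsUnit (u + x) := by
  by_contra h
  exact nonunits_add h (fun h' => hx (IsUnit.neg_iff x |>.1 h')) (by simpa using hu)

end IsLocalRing

namespace Matrix

variable {R : Type*} [Ring R]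

theorem isUnit_fin_two_of_isUnit_schur {a b c d : R} [Invertible a]
    (hs : IsUnit (d - c * ⅟a * b)) : IsUnit !![a, b; c, d] := by
  obtain ⟨s, hs⟩ := hs
  have hfac : !![a, b; c, d] =
      !![1, 0; c * ⅟a, 1] * !![a, 0; 0, (s : R)] * !![1, ⅟a * b; 0, 1] := by
    simp [hs, mul_assoc]
  have hL : IsUnit !![(1 : R), 0; c * ⅟a, 1] :=
    isUnit_iff_exists.2 ⟨!![1, 0; -(c * ⅟a), 1], by simp [one_fin_two], by simp [one_fin_two]⟩
  have hD : IsUnit !![a, 0; 0, (s : R)] :=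
    isUnit_iff_exists.2 ⟨!![⅟a, 0; 0, ↑s⁻¹], by simp [one_fin_two], by simp [one_fin_two]⟩
  have hU : IsUnit !![(1 : R), ⅟a * b; 0, 1] :=
    isUnit_iff_exists.2 ⟨!![1, -(⅟a * b); 0, 1], by simp [one_fin_two], by simp [one_fin_two]⟩
  rw [hfac]
  exact (hL.mul hD).mul hU

theorem isUnit_companion_fin_two {w : R} (hw : IsUnit w) (r : R) : IsUnit !![0, w; 1, r] := by
  obtain ⟨u, rfl⟩ := hw
  exact isUnit_iff_exists.2 ⟨!![-(r * ↑u⁻¹), 1; ↑u⁻¹, 0], by simp [one_fin_two],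
    by simp [one_fin_two, mul_assoc]⟩

def krylovMatrix (A : Matrix (Fin 2) (Fin 2) R) (v : Fin 2 → R) : Matrix (Fin 2) (Fin 2) R :=
  !![v 0, (A *ᵥ v) 0; v 1, (A *ᵥ v) 1]

theorem mul_krylovMatrix_apply_zero (A : Matrix (Fin 2) (Fin 2) R) (v : Fin 2 → R) (i : Fin 2) :
    (A * krylovMatrix A v) i 0 = krylovMatrix A v i 1 := by
  fin_cases i <;> simp [krylovMatrix, mul_apply, mulVec, dotProduct, Fin.sum_univ_two]

theorem exists_eq_conj_companion {A : Matrix (Fin 2) (Fin 2) R} (P : (Matrix (Fin 2) (Fin 2) R)ˣ)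
    (hP : ∀ i, (A * P.val) i 0 = P.val i 1) :
    ∃ w r : R, A = P.val * !![0, w; 1, r] * (P⁻¹).val := by
  set C := (P⁻¹).val * A * P.val with hC
  have hcol : ∀ i, C i 0 = (1 : Matrix (Fin 2) (Fin 2) R) i 1 := by
    intro i
    rw [hC, ← P.inv_mul, mul_assoc, mul_apply, mul_apply]
    simp only [hP]
  refine ⟨C 0 1, C 1 1, ?_⟩
  rw [show !![0, C 0 1; 1, C 1 1] = C by rw [eta_fin_two C, hcol 0, hcol 1]; simp, hC,
    ← mul_assoc, ← mul_assoc, P.mul_inv, one_mul, mul_assoc, P.mul_inv, mul_one]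

section IsLocalRing

variable [IsLocalRing R]

open IsLocalRing

theorem isUnit_fin_two_of_isUnit_diag {A : Matrix (Fin 2) (Fin 2) R} (h00 : IsUnit (A 0 0))
    (h11 : IsUnit (A 1 1)) (h10 : ¬IsUnit (A 1 0)) : IsUnit A := by
  have := h00.invertible
  rw [eta_fin_two A]
  refine isUnit_fin_two_of_isUnit_schur ?_
  rw [sub_eq_add_neg]
  exact isUnit_add_of_isUnit_of_not_isUnit h11
    fun h => h10 (isUnit_of_mul_isUnit_left (isUnit_of_mul_isUnit_left ((IsUnit.neg_iff _).1 h)))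

theorem isUnit_sub_diag_of_not_isUnit {A : Matrix (Fin 2) (Fin 2) R} (hA : ∃ i j, IsUnit (A i j))
    (hA' : ¬IsUnit A) (h01 : ¬IsUnit (A 0 1)) (h10 : ¬IsUnit (A 1 0)) :
    IsUnit (A 1 1 - A 0 0) := by
  obtain ⟨i, j, hij⟩ := hA
  fin_cases i <;> fin_cases j
  · have h11 : ¬IsUnit (A 1 1) := fun h11 => hA' (isUnit_fin_two_of_isUnit_diag hij h11 h10)
    rw [← neg_sub, IsUnit.neg_iff, sub_eq_add_neg]
    exact isUnit_add_of_isUnit_of_not_isUnit hij (mt (IsUnit.neg_iff _).1 h11)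
  · exact absurd hij h01
  · exact absurd hij h10
  · have h00 : ¬IsUnit (A 0 0) := fun h00 => hA' (isUnit_fin_two_of_isUnit_diag h00 hij h10)
    rw [sub_eq_add_neg]
    exact isUnit_add_of_isUnit_of_not_isUnit hij (mt (IsUnit.neg_iff _).1 h00)

theorem exists_isUnit_krylovMatrix {A : Matrix (Fin 2) (Fin 2) R} (hA : ∃ i j, IsUnit (A i j))
    (hA' : ¬IsUnit A) : ∃ v, IsUnit (krylovMatrix A v) := by
  let : Invertible (1 : R) := invertibleOne
  by_cases h10 : IsUnit (A 1 0)
  · refine ⟨![1, 0], ?_⟩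
    have hs : IsUnit (A 1 0 - 0 * ⅟(1 : R) * A 0 0) := by simpa using h10
    simpa [krylovMatrix] using isUnit_fin_two_of_isUnit_schur hs
  by_cases h01 : IsUnit (A 0 1)
  · exact ⟨![0, 1], by simpa [krylovMatrix] using isUnit_companion_fin_two h01 (A 1 1)⟩
  refine ⟨![1, 1], ?_⟩
  have hs : IsUnit (A 1 0 + A 1 1 - 1 * ⅟(1 : R) * (A 0 0 + A 0 1)) := by
    have heq : A 1 0 + A 1 1 - 1 * ⅟(1 : R) * (A 0 0 + A 0 1) =
        (A 1 1 - A 0 0) + (A 1 0 + -A 0 1) := by simp; abel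
    rw [heq]
    exact isUnit_add_of_isUnit_of_not_isUnit (isUnit_sub_diag_of_not_isUnit hA hA' h01 h10)
      (nonunits_add h10 (mt (IsUnit.neg_iff _).1 h01))
  simpa [krylovMatrix] using isUnit_fin_two_of_isUnit_schur hs

end IsLocalRing

end Matrix

open Matrix in
/-- Let `R` be a local ring (where `J(R)` is the set of nonunits) and `A ∈ M₂(R)`.
If `A` has some entry outside `J(R)` and `A` is not invertible, then `A` is similar to a
companion matrix `[[0, w],[1, r]]` with `w ∈ J(R)` and `r ∈ R`. -/
theorem similar_companion_of_not_radical_not_unit {R : Type*} [Ring R] [IsLocalRing R]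
    (A : Matrix (Fin 2) (Fin 2) R)
    (hA : ¬ (∀ i j, ¬ IsUnit (A i j))) (hA' : ¬ IsUnit A) :
    ∃ (w r : R) (P : (Matrix (Fin 2) (Fin 2) R)ˣ),
      ¬ IsUnit w ∧ A = P.val * !![0, w; 1, r] * (P⁻¹).val := by
  push Not at hA
  obtain ⟨v, hv⟩ := exists_isUnit_krylovMatrix hA hA'
  obtain ⟨w, r, hconj⟩ := exists_eq_conj_companion hv.unit
    (by simpa using mul_krylovMatrix_apply_zero A v)
  refine ⟨w, r, hv.unit, fun hw => hA' ?_, hconj⟩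
  rw [hconj]
  exact (Units.isUnit _ |>.mul (isUnit_companion_fin_two hw r)).mul (Units.isUnit _)
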